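/- arXiv:2207.08275 — 2 statements merged into one kernel-verified Lean document; each statement's English description precedes it below -/
import Mathlib

section
/- Fix λ > 0. Two quantal response equilibria coincide under anti-symmetric perturbation of strategies: if x and x' are both fixed points of the map x ↦ (softmax(−(b_i + Σ_j C_{ij}x_j)/λ))_{i∈[n]} with C + Cᵀ ⪰ 0 and C_{ii} = C_{ii}ᵀ, then (x − x')ᵀ C (x − x') + λ Σ_k ([x]_k − [x']_k)(ln[x]_k − ln[x']_k) = 0, and consequently x = x'. -/
open Matrix Finset

noncomputable def softmax {k : ℕ} (z : Fin k → ℝ) : Fin k → ℝ :=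
  fun i => Real.exp (z i) / ∑ j, Real.exp (z j)

/-!
Subtracting the log-form of the two fixed-point equations blockwise gives
`λ (ln x - ln x') = -C (x - x') + μ` with `μ` constant on each block. Since `x` and `x'` both
sum to one on each block, `x - x'` is orthogonal to `μ`, which yields the identity. Both of its
terms are nonnegative (the first because `C + Cᵀ ⪰ 0`, the second because `ln` is increasing),
so every summand `(x_k - x'_k)(ln x_k - ln x'_k)` vanishes, forcing `x = x'`.
-/

section Softmax

variable {k : ℕ}

lemma sum_exp_pos (z : Fin k → ℝ) (i : Fin k) : 0 < ∑ j, Real.exp (z j) :=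
  sum_pos (fun j _ => Real.exp_pos (z j)) ⟨i, mem_univ i⟩

lemma softmax_pos (z : Fin k → ℝ) (i : Fin k) : 0 < softmax z i :=
  div_pos (Real.exp_pos _) (sum_exp_pos z i)

lemma sum_softmax [NeZero k] (z : Fin k → ℝ) : ∑ i, softmax z i = 1 := by
  unfold softmax
  rw [← sum_div, div_self (sum_exp_pos z 0).ne']

lemma log_softmax (z : Fin k → ℝ) (i : Fin k) :
    Real.log (softmax z i) = z i - Real.log (∑ j, Real.exp (z j)) := by
  rw [softmax, Real.log_div (Real.exp_ne_zero _) (sum_exp_pos z i).ne', Real.log_exp]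

/-- The log-normalisers drop out because `softmax z - softmax w` sums to zero. -/
lemma sum_softmax_sub_mul_log_softmax_sub (z w : Fin k → ℝ) :
    ∑ i, (softmax z i - softmax w i) * (Real.log (softmax z i) - Real.log (softmax w i)) =
      ∑ i, (softmax z i - softmax w i) * (z i - w i) := by
  rcases Nat.eq_zero_or_pos k with rfl | hk
  · simp
  have : NeZero k := ⟨hk.ne'⟩
  set c := Real.log (∑ j, Real.exp (w j)) - Real.log (∑ j, Real.exp (z j))
  have hlog : ∀ i, Real.log (softmax z i) - Real.log (softmax w i) = z i - w i + c := by
    intro i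
    rw [log_softmax, log_softmax]
    ring
  have hsum : ∑ i, (softmax z i - softmax w i) = 0 := by
    rw [sum_sub_distrib, sum_softmax, sum_softmax, sub_self]
  simp only [hlog, mul_add, sum_add_distrib, ← sum_mul, hsum, zero_mul, add_zero]

end Softmax

section Blockwise

variable {n : ℕ} {m : Fin n → ℕ}

lemma sum_sub_mul_log_sub_of_blockwise_softmax {x x' z w : ((i : Fin n) × Fin (m i)) → ℝ}
    (hx : ∀ i, (fun a => x ⟨i, a⟩) = softmax (fun a => z ⟨i, a⟩))
    (hx' : ∀ i, (fun a => x' ⟨i, a⟩) = softmax (fun a => w ⟨i, a⟩)) :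
    ∑ p, (x p - x' p) * (Real.log (x p) - Real.log (x' p)) =
      ∑ p, (x p - x' p) * (z p - w p) := by
  simp only [Fintype.sum_sigma]
  refine sum_congr rfl fun i _ => ?_
  have hxi := funext_iff.mp (hx i)
  have hx'i := funext_iff.mp (hx' i)
  simp only [hxi, hx'i]
  exact sum_softmax_sub_mul_log_softmax_sub _ _

lemma pos_of_blockwise_softmax {x z : ((i : Fin n) × Fin (m i)) → ℝ}
    (hx : ∀ i, (fun a => x ⟨i, a⟩) = softmax (fun a => z ⟨i, a⟩))
    (p : (i : Fin n) × Fin (m i)) : 0 < x p := by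
  rw [show x p = softmax (fun a => z ⟨p.1, a⟩) p.2 from congrFun (hx p.1) p.2]
  exact softmax_pos _ _

end Blockwise

lemma dotProduct_mulVec_self_nonneg_of_posSemidef_add_transpose {ι : Type*} [Fintype ι]
    {C : Matrix ι ι ℝ} (hC : (C + Cᵀ).PosSemidef) (v : ι → ℝ) : 0 ≤ v ⬝ᵥ C *ᵥ v := by
  have h := hC.dotProduct_mulVec_nonneg v
  rw [star_trivial, add_mulVec, dotProduct_add, mulVec_transpose, dotProduct_comm v (v ᵥ* C),
    ← dotProduct_mulVec] at h
  linarith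

lemma sub_mul_log_sub_nonneg {a b : ℝ} (ha : 0 < a) (hb : 0 < b) :
    0 ≤ (a - b) * (Real.log a - Real.log b) := by
  rcases le_total b a with h | h
  · exact mul_nonneg (sub_nonneg.2 h) (sub_nonneg.2 (Real.log_le_log hb h))
  · exact mul_nonneg_of_nonpos_of_nonpos (sub_nonpos.2 h) (sub_nonpos.2 (Real.log_le_log ha h))

lemma eq_of_sub_mul_log_sub_eq_zero {a b : ℝ} (ha : 0 < a) (hb : 0 < b)
    (h : (a - b) * (Real.log a - Real.log b) = 0) : a = b := by
  rcases mul_eq_zero.1 h with h | h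
  · exact sub_eq_zero.1 h
  · exact Real.log_injOn_pos ha hb (sub_eq_zero.1 h)

theorem stmt6_general {n : ℕ} {m : Fin n → ℕ}
    (b : ((i : Fin n) × Fin (m i)) → ℝ)
    (C : Matrix ((i : Fin n) × Fin (m i)) ((i : Fin n) × Fin (m i)) ℝ)
    (lam : ℝ) (hlam : 0 < lam)
    (hC : (C + Cᵀ).PosSemidef)
    (x x' : ((i : Fin n) × Fin (m i)) → ℝ)
    (hx : ∀ i : Fin n, (fun a => x ⟨i, a⟩) =
      softmax (fun a => -(b ⟨i, a⟩ + C.mulVec x ⟨i, a⟩) / lam))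
    (hx' : ∀ i : Fin n, (fun a => x' ⟨i, a⟩) =
      softmax (fun a => -(b ⟨i, a⟩ + C.mulVec x' ⟨i, a⟩) / lam)) :
    (x - x') ⬝ᵥ C.mulVec (x - x') +
        lam * ∑ p, (x p - x' p) * (Real.log (x p) - Real.log (x' p)) = 0 ∧
      x = x' := by
  set z := fun p => -(b p + C.mulVec x p) / lam
  set w := fun p => -(b p + C.mulVec x' p) / lam
  set L := ∑ p, (x p - x' p) * (Real.log (x p) - Real.log (x' p)) with hL_def
  have hidentity : (x - x') ⬝ᵥ C.mulVec (x - x') + lam * L = 0 := by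
    rw [hL_def, sum_sub_mul_log_sub_of_blockwise_softmax (z := z) (w := w) hx hx', mul_sum,
      dotProduct, ← sum_add_distrib]
    refine sum_eq_zero fun p _ => ?_
    simp only [z, w, mulVec_sub, Pi.sub_apply]
    field_simp
    ring
  have hxpos := pos_of_blockwise_softmax (z := z) hx
  have hx'pos := pos_of_blockwise_softmax (z := w) hx'
  have hterm_nonneg : ∀ p ∈ univ, 0 ≤ (x p - x' p) * (Real.log (x p) - Real.log (x' p)) :=
    fun p _ => sub_mul_log_sub_nonneg (hxpos p) (hx'pos p)
  have hquad := dotProduct_mulVec_self_nonneg_of_posSemidef_add_transpose hC (x - x')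
  have hL : L = 0 := by nlinarith [sum_nonneg hterm_nonneg]
  refine ⟨hidentity, funext fun p => eq_of_sub_mul_log_sub_eq_zero (hxpos p) (hx'pos p) ?_⟩
  exact (sum_eq_zero_iff_of_nonneg hterm_nonneg).1 hL p (mem_univ p)

/-- if `x` and `x'` are both fixed points of the stacked quantal
response map with `C + Cᵀ ⪰ 0` and symmetric diagonal blocks, then
`(x - x')ᵀ C (x - x') + λ Σ_k (x_k - x'_k)(ln x_k - ln x'_k) = 0`, and
consequently `x = x'`. -/
theorem stmt6 {n : ℕ} {m : Fin n → ℕ}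
    (b : ((i : Fin n) × Fin (m i)) → ℝ)
    (C : Matrix ((i : Fin n) × Fin (m i)) ((i : Fin n) × Fin (m i)) ℝ)
    (lam : ℝ) (hlam : 0 < lam)
    (hC : (C + Cᵀ).PosSemidef)
    (hCii : ∀ i : Fin n, ∀ a b : Fin (m i), C ⟨i, a⟩ ⟨i, b⟩ = C ⟨i, b⟩ ⟨i, a⟩)
    (x x' : ((i : Fin n) × Fin (m i)) → ℝ)
    (hx : ∀ i : Fin n, (fun a => x ⟨i, a⟩) =
      softmax (fun a => -(b ⟨i, a⟩ + C.mulVec x ⟨i, a⟩) / lam))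
    (hx' : ∀ i : Fin n, (fun a => x' ⟨i, a⟩) =
      softmax (fun a => -(b ⟨i, a⟩ + C.mulVec x' ⟨i, a⟩) / lam)) :
    (x - x') ⬝ᵥ C.mulVec (x - x') +
        lam * ∑ p, (x p - x' p) * (Real.log (x p) - Real.log (x' p)) = 0 ∧
      x = x' :=
  stmt6_general b C lam hlam hC x x' hx hx'
end

section
/- If λ > ‖C‖ (operator norm where C ∈ ℝ^{m×m}), the map Φ(x)_i = softmax(−(b_i + Σ_j C_{ij}x_j)/λ) is a contraction on the product of simplices in the Euclidean norm, with Lipschitz constant at most ‖C‖/λ < 1; hence it has a unique fixed point. -/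
open Matrix Finset
open scoped Matrix.Norms.L2Operator

def simplex (k : ℕ) : Set (Fin k → ℝ) :=
  {y | ∑ i, y i = 1 ∧ ∀ i, 0 ≤ y i}

/-- Euclidean norm of a joint strategy vector. -/
noncomputable def enorm {ι : Type*} [Fintype ι] (v : ι → ℝ) : ℝ :=
  Real.sqrt (∑ p, v p ^ 2)

/-!
Softmax is 1-Lipschitz for the Euclidean norm: along the segment from `w` to `z` its
derivative is `v ↦ diag(p) v - p pᵀ v`, and since `p` is a probability vector,
`∑ (pᵢ (vᵢ - ⟨p, v⟩))² ≤ ∑ pᵢ (vᵢ - ⟨p, v⟩)² = Var_p(v) ≤ ∑ pᵢ vᵢ² ≤ ‖v‖²`.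
Applied block by block, after the affine map `x ↦ -(b + C x)/λ`, which is `‖C‖/λ`-Lipschitz,
this makes `Φ` a contraction of `ℝ^N` whose image lies in the product of simplices, so the
Banach fixed point theorem gives a unique fixed point, necessarily in that product.
-/

section Softmax

variable {k : ℕ}

theorem softmax_mem_simplex (hk : 0 < k) (z : Fin k → ℝ) : softmax z ∈ simplex k := by
  have : Nonempty (Fin k) := ⟨⟨0, hk⟩⟩
  have hS : 0 < ∑ j, Real.exp (z j) := Finset.sum_pos (fun j _ => Real.exp_pos _) univ_nonempty
  refine ⟨?_, fun i => div_nonneg (Real.exp_pos _).le hS.le⟩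
  simp only [softmax, ← Finset.sum_div]
  exact div_self hS.ne'

theorem hasDerivAt_softmax_line (z v : Fin k → ℝ) (t : ℝ) (i : Fin k) :
    HasDerivAt (fun t => softmax (z + t • v) i)
      (softmax (z + t • v) i * (v i - ∑ j, softmax (z + t • v) j * v j)) t := by
  have hexp : ∀ j, HasDerivAt (fun t => Real.exp (z j + t * v j))
      (Real.exp (z j + t * v j) * v j) t := fun j => by
    simpa using ((hasDerivAt_id t).mul_const (v j)).const_add (z j) |>.exp
  have hS : 0 < ∑ j, Real.exp (z j + t * v j) :=
    Finset.sum_pos (fun j _ => Real.exp_pos _) ⟨i, mem_univ i⟩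
  refine ((hexp i).fun_div (HasDerivAt.fun_sum fun j _ => hexp j) hS.ne').congr_deriv ?_
  simp only [softmax, Pi.add_apply, Pi.smul_apply, smul_eq_mul, ← Finset.sum_div,
    div_mul_eq_mul_div]
  field_simp

theorem sum_sq_mul_sub_sum_mul_le {ι : Type*} [Fintype ι] {p : ι → ℝ} (hp0 : ∀ i, 0 ≤ p i)
    (hp1 : ∑ i, p i = 1) (v : ι → ℝ) :
    ∑ i, (p i * (v i - ∑ j, p j * v j)) ^ 2 ≤ ∑ i, v i ^ 2 := by
  set s := ∑ j, p j * v j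
  have hp_le : ∀ i, p i ≤ 1 := fun i =>
    hp1 ▸ Finset.single_le_sum (fun j _ => hp0 j) (mem_univ i)
  have hvar : ∑ i, p i * (v i - s) ^ 2 = ∑ i, p i * v i ^ 2 - s ^ 2 := by
    have hexp : ∀ i, p i * (v i - s) ^ 2 = p i * v i ^ 2 - 2 * s * (p i * v i) + s ^ 2 * p i :=
      fun i => by ring
    simp only [hexp, Finset.sum_add_distrib, Finset.sum_sub_distrib, ← Finset.mul_sum, hp1]
    ring
  calc ∑ i, (p i * (v i - s)) ^ 2 ≤ ∑ i, p i * (v i - s) ^ 2 :=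
        Finset.sum_le_sum fun i _ => by
          rw [mul_pow]
          exact mul_le_mul_of_nonneg_right (by nlinarith [hp0 i, hp_le i]) (sq_nonneg _)
    _ ≤ ∑ i, p i * v i ^ 2 := by rw [hvar]; nlinarith [sq_nonneg s]
    _ ≤ ∑ i, v i ^ 2 :=
        Finset.sum_le_sum fun i _ => by nlinarith [hp0 i, hp_le i, sq_nonneg (v i)]

theorem sum_sq_softmax_sub_le (z w : Fin k → ℝ) :
    ∑ i, (softmax z i - softmax w i) ^ 2 ≤ ∑ i, (z i - w i) ^ 2 := by
  rcases Nat.eq_zero_or_pos k with rfl | hk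
  · simp
  set d := fun i => softmax z i - softmax w i
  set v := z - w
  set p := fun t : ℝ => softmax (w + t • v)
  -- Mean value theorem for `t ↦ ⟨d, p t⟩`: `‖d‖² = ⟨d, J v⟩ ≤ ‖d‖ ‖J v‖` with `J` the Jacobian.
  set h := fun t : ℝ => ∑ i, d i * p t i
  have hderiv : ∀ t, HasDerivAt h (∑ i, d i * (p t i * (v i - ∑ j, p t j * v j))) t :=
    fun t => HasDerivAt.fun_sum fun i _ => (hasDerivAt_softmax_line w v t i).const_mul (d i)
  obtain ⟨c, -, hc⟩ := exists_hasDerivAt_eq_slope h _ zero_lt_one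
    (fun t _ => (hderiv t).continuousAt.continuousWithinAt) fun t _ => hderiv t
  have hh : h 1 - h 0 = ∑ i, d i ^ 2 := by
    simp only [h, p, v, one_smul, zero_smul, add_zero, add_sub_cancel, ← Finset.sum_sub_distrib,
      ← mul_sub, d, sq]
  rw [hh, sub_zero, div_one] at hc
  have hCS :=
    Finset.sum_mul_sq_le_sq_mul_sq univ d fun i => p c i * (v i - ∑ j, p c j * v j)
  have hJ := sum_sq_mul_sub_sum_mul_le (softmax_mem_simplex hk (w + c • v)).2
    (softmax_mem_simplex hk _).1 v
  rw [hc] at hCS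
  have hG : 0 ≤ ∑ i, (p c i * (v i - ∑ j, p c j * v j)) ^ 2 :=
    Finset.sum_nonneg fun i _ => sq_nonneg _
  calc ∑ i, d i ^ 2 ≤ ∑ i, (p c i * (v i - ∑ j, p c j * v j)) ^ 2 := by nlinarith
    _ ≤ ∑ i, v i ^ 2 := hJ

end Softmax

section EuclideanNorm

variable {ι : Type*} [Fintype ι]

theorem enorm_eq_norm_toLp (v : ι → ℝ) : _root_.enorm v = ‖WithLp.toLp 2 v‖ := by
  simp [_root_.enorm, EuclideanSpace.norm_eq]

theorem enorm_mulVec_le {κ : Type*} [Fintype κ] [DecidableEq ι] (A : Matrix κ ι ℝ) (v : ι → ℝ) :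
    _root_.enorm (A *ᵥ v) ≤ ‖A‖ * _root_.enorm v := by
  rw [enorm_eq_norm_toLp, enorm_eq_norm_toLp]
  exact A.l2_opNorm_mulVec (WithLp.toLp 2 v)

theorem exists_unique_fixedPoint_of_enorm_sub_le {f : (ι → ℝ) → ι → ℝ} {K : ℝ}
    (hK : K < 1) (hf : ∀ x y, _root_.enorm (f x - f y) ≤ K * _root_.enorm (x - y)) :
    ∃! x, f x = x := by
  let g : EuclideanSpace ℝ ι → EuclideanSpace ℝ ι := fun u => WithLp.toLp 2 (f u.ofLp)
  have hg : ContractingWith K.toNNReal g := by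
    refine ⟨Real.toNNReal_lt_one.2 hK, LipschitzWith.of_dist_le_mul fun u u' => ?_⟩
    rw [dist_eq_norm, dist_eq_norm]
    calc ‖g u - g u'‖ = _root_.enorm (f u.ofLp - f u'.ofLp) := (enorm_eq_norm_toLp _).symm
      _ ≤ K * _root_.enorm (u.ofLp - u'.ofLp) := hf _ _
      _ ≤ K.toNNReal * ‖u - u'‖ := by
        rw [enorm_eq_norm_toLp]
        exact mul_le_mul_of_nonneg_right (Real.le_coe_toNNReal K) (norm_nonneg _)
  refine ⟨(hg.fixedPoint g).ofLp, congrArg WithLp.ofLp hg.fixedPoint_isFixedPt, fun x hx => ?_⟩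
  have : Function.IsFixedPt g (WithLp.toLp 2 x) := congrArg (WithLp.toLp 2) hx
  exact congrArg WithLp.ofLp (hg.fixedPoint_unique this)

end EuclideanNorm

section BlockSoftmax

variable {ι : Type*} {m : ι → ℕ}

noncomputable def blockSoftmax (z : (Σ i, Fin (m i)) → ℝ) : (Σ i, Fin (m i)) → ℝ :=
  fun p => softmax (fun a => z ⟨p.1, a⟩) p.2

theorem blockSoftmax_mem_simplex (hm : ∀ i, 0 < m i) (z : (Σ i, Fin (m i)) → ℝ) (i : ι) :
    (fun a => blockSoftmax z ⟨i, a⟩) ∈ simplex (m i) :=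
  softmax_mem_simplex (hm i) _

theorem enorm_blockSoftmax_sub_le [Fintype ι] (z w : (Σ i, Fin (m i)) → ℝ) :
    _root_.enorm (blockSoftmax z - blockSoftmax w) ≤ _root_.enorm (z - w) := by
  refine Real.sqrt_le_sqrt ?_
  simp only [Pi.sub_apply, Fintype.sum_sigma]
  exact Finset.sum_le_sum fun i _ => sum_sq_softmax_sub_le _ _

end BlockSoftmax

/-- if `λ > ‖C‖` (ℓ₂ operator norm), the stacked quantal response
map is a contraction on the product of simplices with Lipschitz constant at most
`‖C‖/λ < 1` in the Euclidean norm, and hence has a unique fixed point there. -/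
theorem stmt19 {n : ℕ} {m : Fin n → ℕ} (hm : ∀ i, 0 < m i)
    (b : ((i : Fin n) × Fin (m i)) → ℝ)
    (C : Matrix ((i : Fin n) × Fin (m i)) ((i : Fin n) × Fin (m i)) ℝ)
    (lam : ℝ) (hlam : ‖C‖ < lam) :
    let Φ : (((i : Fin n) × Fin (m i)) → ℝ) → (((i : Fin n) × Fin (m i)) → ℝ) :=
      fun x p => softmax (fun a => -(b ⟨p.1, a⟩ + C.mulVec x ⟨p.1, a⟩) / lam) p.2
    let S : Set (((i : Fin n) × Fin (m i)) → ℝ) :=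
      {x | ∀ i : Fin n, (fun a => x ⟨i, a⟩) ∈ simplex (m i)}
    (∀ x ∈ S, ∀ y ∈ S, _root_.enorm (Φ x - Φ y) ≤ (‖C‖ / lam) * _root_.enorm (x - y)) ∧
      ∃! x, x ∈ S ∧ Φ x = x := by
  intro Φ S
  have hlam_pos : 0 < lam := (norm_nonneg C).trans_lt hlam
  have hΦ : ∀ x, Φ x = blockSoftmax (fun p => -(b p + (C *ᵥ x) p) / lam) := fun x => rfl
  have hcontract : ∀ x y, _root_.enorm (Φ x - Φ y) ≤ (‖C‖ / lam) * _root_.enorm (x - y) := by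
    intro x y
    calc _root_.enorm (Φ x - Φ y)
        ≤ _root_.enorm (((-lam⁻¹) • C) *ᵥ (x - y)) := by
          rw [hΦ, hΦ]
          refine (enorm_blockSoftmax_sub_le _ _).trans_eq (congrArg _ (funext fun p => ?_))
          simp only [Pi.sub_apply, smul_mulVec, mulVec_sub, Pi.smul_apply, smul_eq_mul]
          ring
      _ ≤ ‖(-lam⁻¹) • C‖ * _root_.enorm (x - y) := enorm_mulVec_le ((-lam⁻¹) • C) (x - y)
      _ = (‖C‖ / lam) * _root_.enorm (x - y) := by
          rw [norm_smul, norm_neg, norm_inv, Real.norm_of_nonneg hlam_pos.le, inv_mul_eq_div]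
  have hmaps : ∀ x, Φ x ∈ S := fun x i => hΦ x ▸ blockSoftmax_mem_simplex hm _ i
  obtain ⟨x, hx, hunique⟩ :=
    exists_unique_fixedPoint_of_enorm_sub_le ((div_lt_one hlam_pos).2 hlam) hcontract
  refine ⟨fun x _ y _ => hcontract x y, x, ⟨hx ▸ hmaps x, hx⟩, fun y hy => hunique y hy.2⟩
end
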